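/- Given positive variances V_ℓ and costs C_ℓ for ℓ = 0,...,L, the choice N_ℓ = μ √(V_ℓ/C_ℓ) (with appropriate proportionality constant μ chosen so that Σ V_ℓ/N_ℓ equals a prescribed tolerance ε²/2) minimizes the total cost Σ_ℓ N_ℓ C_ℓ subject to the constraint Σ_ℓ V_ℓ/N_ℓ ≤ ε²/2, when the N_ℓ are allowed to be positive reals. -/

import Mathlib

/-!
By Cauchy–Schwarz, `(∑ √(V ℓ C ℓ))² ≤ (∑ V ℓ / N ℓ) (∑ N ℓ C ℓ)` for every positive allocation `N`,
so under the variance constraint the cost is at least `(2 / ε²) (∑ √(V ℓ C ℓ))²`. The allocation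
`N ℓ ∝ √(V ℓ / C ℓ)` is the equality case of Cauchy–Schwarz, and the constant `μ` makes the
constraint active, so its cost attains this lower bound.
-/

open Finset

namespace Real

lemma sqrt_div_mul_self (a : ℝ) {b : ℝ} (hb : 0 ≤ b) : √(a / b) * b = √(a * b) := by
  rw [sqrt_div' a hb, div_mul_eq_mul_div, mul_div_assoc, div_sqrt, sqrt_mul' a hb]

lemma div_sqrt_div (a : ℝ) {b : ℝ} (hb : 0 ≤ b) : a / √(a / b) = √(a * b) := by
  rw [sqrt_div' a hb, div_div_eq_mul_div, mul_div_right_comm, div_sqrt, sqrt_mul' a hb]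

end Real

lemma sq_sum_sqrt_mul_le_sum_div_mul_sum_mul {ι : Type*} (s : Finset ι) {a b n : ι → ℝ}
    (ha : ∀ i ∈ s, 0 ≤ a i) (hb : ∀ i ∈ s, 0 ≤ b i) (hn : ∀ i ∈ s, 0 < n i) :
    (∑ i ∈ s, √(a i * b i)) ^ 2 ≤ (∑ i ∈ s, a i / n i) * ∑ i ∈ s, n i * b i := by
  refine sum_sq_le_sum_mul_sum_of_sq_le_mul s (fun i hi ↦ div_nonneg (ha i hi) (hn i hi).le)
    (fun i hi ↦ mul_nonneg (hn i hi).le (hb i hi)) fun i hi ↦ le_of_eq ?_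
  rw [Real.sq_sqrt (mul_nonneg (ha i hi) (hb i hi))]
  field_simp [(hn i hi).ne']

/-- Optimality of the MLMC sample allocation: with `Nopt ℓ = μ * √(V ℓ / C ℓ)`
where the proportionality constant `μ` is chosen so that
`∑ V ℓ / Nopt ℓ = ε²/2`, the allocation `Nopt` minimizes the total cost
`∑ N ℓ * C ℓ` among all real positive allocations satisfying the variance
constraint `∑ V ℓ / N ℓ ≤ ε²/2`. -/
theorem mlmc_optimal_sample_allocation
    (L : ℕ) (V C : Fin (L + 1) → ℝ)
    (hV : ∀ ℓ, 0 < V ℓ) (hC : ∀ ℓ, 0 < C ℓ)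
    (ε : ℝ) (hε : 0 < ε)
    (μ : ℝ) (hμ : μ = (2 / ε ^ 2) * ∑ ℓ, Real.sqrt (V ℓ * C ℓ))
    (Nopt : Fin (L + 1) → ℝ)
    (hNopt : ∀ ℓ, Nopt ℓ = μ * Real.sqrt (V ℓ / C ℓ)) :
    (∑ ℓ, V ℓ / Nopt ℓ = ε ^ 2 / 2) ∧
    ∀ N : Fin (L + 1) → ℝ, (∀ ℓ, 0 < N ℓ) →
      (∑ ℓ, V ℓ / N ℓ ≤ ε ^ 2 / 2) →
      ∑ ℓ, Nopt ℓ * C ℓ ≤ ∑ ℓ, N ℓ * C ℓ := by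
  set S := ∑ ℓ, √(V ℓ * C ℓ) with hS_def
  have hS : 0 < S := sum_pos (fun ℓ _ ↦ Real.sqrt_pos.2 (mul_pos (hV ℓ) (hC ℓ))) univ_nonempty
  have hvar_opt : ∑ ℓ, V ℓ / Nopt ℓ = S / μ := by
    rw [hS_def, sum_div]
    simp_rw [hNopt, div_mul_eq_div_div_swap, Real.div_sqrt_div _ (hC _).le]
  have hcost_opt : ∑ ℓ, Nopt ℓ * C ℓ = μ * S := by
    rw [hS_def, mul_sum]
    simp_rw [hNopt, mul_assoc, Real.sqrt_div_mul_self _ (hC _).le]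
  refine ⟨by rw [hvar_opt, hμ]; field_simp, fun N hN hvar ↦ ?_⟩
  have hcost_nonneg : 0 ≤ ∑ ℓ, N ℓ * C ℓ := sum_nonneg fun ℓ _ ↦ (mul_pos (hN ℓ) (hC ℓ)).le
  have hCS := sq_sum_sqrt_mul_le_sum_div_mul_sum_mul univ (fun ℓ _ ↦ (hV ℓ).le)
    (fun ℓ _ ↦ (hC ℓ).le) (fun ℓ _ ↦ hN ℓ)
  calc ∑ ℓ, Nopt ℓ * C ℓ = 2 / ε ^ 2 * S ^ 2 := by rw [hcost_opt, hμ]; ring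
    _ ≤ 2 / ε ^ 2 * (ε ^ 2 / 2 * ∑ ℓ, N ℓ * C ℓ) := by
      gcongr
      exact hCS.trans (mul_le_mul_of_nonneg_right hvar hcost_nonneg)
    _ = ∑ ℓ, N ℓ * C ℓ := by field_simp
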